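/- Let N ≥ 1 and fix radii 0 < R₁ < R₂ < … < R_{N+1} = R, a path-loss exponent α > 0, reader transmit power P_T > 0, noise power 𝒩 > 0, and SINR threshold γ > 0. Suppose the reflection coefficients satisfy 0 < ξ_N ≤ ξ_{N-1} ≤ … ≤ ξ₁ ≤ 1, ξ_N ≥ γ·𝒩·R^{2α}/P_T, and for every i ≤ N−1, ξ_i ≥ γ·(∑_{j=i+1}^{N} ξ_j·R_{i+1}^{2α}/R_j^{2α} + 𝒩·R_{i+1}^{2α}/P_T). Then for every choice of distances r_j ∈ [R_j, R_{j+1}] (j = 1,…,N) and for every i ∈ {1,…,N}, the SINR of the i-th signal satisfies P_T·ξ_i·r_i^{−2α} / (∑_{j=i+1}^{N} P_T·ξ_j·r_j^{−2α} + 𝒩) ≥ γ (where the sum is empty for i = N, so this is the SNR condition P_T·ξ_N·r_N^{−2α}/𝒩 ≥ γ). In other words, under these reflection-coefficient conditions every multiplexed backscatter node is successfully decoded by successive interference cancellation. -/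

import Mathlib

open Finset

/-!
Each SINR is antitone in the distance of its own node and monotone in the distances of the
interfering nodes, so over the annuli it is smallest when node `i` sits on the outer rim
`R (i + 1)` of its subregion and every node `j > i` on the inner rim `R j` of its own. Dividing
the selection criterion for `ξ i` by `R (i + 1) ^ (2 * α) / PT` turns it into exactly the
statement that this worst-case SINR is at least `γ`.
-/

lemma pos_of_pos_of_le_succ {f : ℕ → ℝ} {m n : ℕ} (hm : 0 < f m)
    (hf : ∀ i, m ≤ i → i < n → f i ≤ f (i + 1)) {j : ℕ} (hmj : m ≤ j) (hjn : j ≤ n) :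
    0 < f j := by
  have hmono : MonotoneOn f (Set.Icc m n) :=
    monotoneOn_of_le_succ Set.ordConnected_Icc fun a _ ha hsa => by
      simpa using hf a ha.1 (by simpa using hsa.2)
  exact hm.trans_le <| hmono ⟨le_rfl, hmj.trans hjn⟩ ⟨hmj, hjn⟩ hmj

lemma pos_of_pos_of_succ_le {f : ℕ → ℝ} {m n : ℕ} (hn : 0 < f n)
    (hf : ∀ i, m ≤ i → i < n → f (i + 1) ≤ f i) {j : ℕ} (hmj : m ≤ j) (hjn : j ≤ n) :
    0 < f j := by
  have hanti : AntitoneOn f (Set.Icc m n) :=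
    antitoneOn_of_succ_le Set.ordConnected_Icc fun a _ ha hsa => by
      simpa using hf a ha.1 (by simpa using hsa.2)
  exact hn.trans_le <| hanti ⟨hmj, hjn⟩ ⟨hmj.trans hjn, le_rfl⟩ hjn

noncomputable def sinr (N : ℕ) (PT noise p : ℝ) (ξ r : ℕ → ℝ) (i : ℕ) : ℝ :=
  PT * ξ i * r i ^ (-p) / ((∑ j ∈ Finset.Icc (i + 1) N, PT * ξ j * r j ^ (-p)) + noise)

section

variable {N i : ℕ} {PT noise p γ : ℝ} {ξ R r : ℕ → ℝ}

lemma le_sinr_of_le_worst_case (hPT : 0 ≤ PT) (hnoise : 0 < noise) (hp : 0 ≤ p) (hγ : 0 ≤ γ)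
    (hξi : 0 ≤ ξ i) (hξ : ∀ j ∈ Finset.Icc (i + 1) N, 0 ≤ ξ j)
    (hri : 0 < r i) (hrR : r i ≤ R (i + 1))
    (hR : ∀ j ∈ Finset.Icc (i + 1) N, 0 < R j) (hRr : ∀ j ∈ Finset.Icc (i + 1) N, R j ≤ r j)
    (hworst : γ * ((∑ j ∈ Finset.Icc (i + 1) N, PT * ξ j * R j ^ (-p)) + noise)
      ≤ PT * ξ i * R (i + 1) ^ (-p)) :
    γ ≤ sinr N PT noise p ξ r i := by
  have hsignal : PT * ξ i * R (i + 1) ^ (-p) ≤ PT * ξ i * r i ^ (-p) :=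
    mul_le_mul_of_nonneg_left (Real.rpow_le_rpow_of_nonpos hri hrR (neg_nonpos.2 hp))
      (mul_nonneg hPT hξi)
  have hinterference : ∑ j ∈ Finset.Icc (i + 1) N, PT * ξ j * r j ^ (-p)
      ≤ ∑ j ∈ Finset.Icc (i + 1) N, PT * ξ j * R j ^ (-p) :=
    sum_le_sum fun j hj => mul_le_mul_of_nonneg_left
      (Real.rpow_le_rpow_of_nonpos (hR j hj) (hRr j hj) (neg_nonpos.2 hp))
      (mul_nonneg hPT (hξ j hj))
  have hpos : 0 < (∑ j ∈ Finset.Icc (i + 1) N, PT * ξ j * r j ^ (-p)) + noise := by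
    refine add_pos_of_nonneg_of_pos (sum_nonneg fun j hj => ?_) hnoise
    have := (hR j hj).trans_le (hRr j hj)
    have := hξ j hj
    positivity
  rw [sinr, le_div_iff₀ hpos]
  calc γ * ((∑ j ∈ Finset.Icc (i + 1) N, PT * ξ j * r j ^ (-p)) + noise)
      ≤ γ * ((∑ j ∈ Finset.Icc (i + 1) N, PT * ξ j * R j ^ (-p)) + noise) := by gcongr
    _ ≤ PT * ξ i * R (i + 1) ^ (-p) := hworst
    _ ≤ PT * ξ i * r i ^ (-p) := hsignal

lemma selection_criterion_iff (hPT : 0 < PT) (hRi : 0 < R (i + 1))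
    (hR : ∀ j ∈ Finset.Icc (i + 1) N, 0 < R j) :
    γ * ((∑ j ∈ Finset.Icc (i + 1) N, ξ j * R (i + 1) ^ p / R j ^ p)
        + noise * R (i + 1) ^ p / PT) ≤ ξ i ↔
      γ * ((∑ j ∈ Finset.Icc (i + 1) N, PT * ξ j * R j ^ (-p)) + noise)
        ≤ PT * ξ i * R (i + 1) ^ (-p) := by
  have hQ : 0 < R (i + 1) ^ p := Real.rpow_pos_of_pos hRi p
  have hscale : 0 < PT / R (i + 1) ^ p := div_pos hPT hQ
  have hsum : ∑ j ∈ Finset.Icc (i + 1) N, PT * ξ j * R j ^ (-p)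
      = (∑ j ∈ Finset.Icc (i + 1) N, ξ j * R (i + 1) ^ p / R j ^ p) * (PT / R (i + 1) ^ p) := by
    rw [sum_mul]
    refine sum_congr rfl fun j hj => ?_
    rw [Real.rpow_neg (hR j hj).le]
    field_simp
  rw [← mul_le_mul_iff_of_pos_right hscale, hsum, Real.rpow_neg hRi.le]
  generalize ∑ j ∈ Finset.Icc (i + 1) N, ξ j * R (i + 1) ^ p / R j ^ p = S
  apply iff_of_eq
  congr 1 <;> field_simp

end

theorem backcom_selection_criteria_all_decoded
    (N : ℕ) (R ξ : ℕ → ℝ) (α PT Noise γ : ℝ)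
    (hα : 0 < α) (hPT : 0 < PT) (hNoise : 0 < Noise) (hγ : 0 < γ)
    (hR1 : 0 < R 1)
    (hRmono : ∀ i, 1 ≤ i → i ≤ N → R i < R (i + 1))
    (hξN : 0 < ξ N)
    (hξanti : ∀ i, 1 ≤ i → i ≤ N - 1 → ξ (i + 1) ≤ ξ i)
    (hξNlb : γ * Noise * R (N + 1) ^ (2 * α) / PT ≤ ξ N)
    (hξlb : ∀ i, 1 ≤ i → i ≤ N - 1 →
      γ * ((∑ j ∈ Finset.Icc (i + 1) N, ξ j * R (i + 1) ^ (2 * α) / R j ^ (2 * α))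
        + Noise * R (i + 1) ^ (2 * α) / PT) ≤ ξ i)
    (r : ℕ → ℝ) (hr : ∀ j, 1 ≤ j → j ≤ N → r j ∈ Set.Icc (R j) (R (j + 1)))
    (i : ℕ) (hi1 : 1 ≤ i) (hiN : i ≤ N) :
    γ ≤ PT * ξ i * r i ^ (-(2 * α)) /
      ((∑ j ∈ Finset.Icc (i + 1) N, PT * ξ j * r j ^ (-(2 * α))) + Noise) := by
  have hRpos : ∀ j, 1 ≤ j → j ≤ N + 1 → 0 < R j := fun j h1 h2 =>
    pos_of_pos_of_le_succ hR1 (fun k hk hkN => (hRmono k hk (by omega)).le) h1 h2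
  have hξpos : ∀ j, 1 ≤ j → j ≤ N → 0 < ξ j := fun j h1 h2 =>
    pos_of_pos_of_succ_le hξN (fun k hk hkN => hξanti k hk (by omega)) h1 h2
  have hcriterion : γ * ((∑ j ∈ Finset.Icc (i + 1) N, ξ j * R (i + 1) ^ (2 * α) / R j ^ (2 * α))
      + Noise * R (i + 1) ^ (2 * α) / PT) ≤ ξ i := by
    rcases hiN.lt_or_eq with hlt | rfl
    · exact hξlb i hi1 (by omega)
    · simpa [mul_div_assoc, mul_assoc] using hξNlb
  have hIcc : ∀ j ∈ Finset.Icc (i + 1) N, 1 ≤ j ∧ j ≤ N := fun j hj => by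
    rw [Finset.mem_Icc] at hj; omega
  have hR : ∀ j ∈ Finset.Icc (i + 1) N, 0 < R j := fun j hj =>
    hRpos j (hIcc j hj).1 (Nat.le_succ_of_le (hIcc j hj).2)
  have hri : R i ≤ r i ∧ r i ≤ R (i + 1) := hr i hi1 hiN
  exact le_sinr_of_le_worst_case hPT.le hNoise (by positivity) hγ.le (hξpos i hi1 hiN).le
    (fun j hj => (hξpos j (hIcc j hj).1 (hIcc j hj).2).le)
    ((hRpos i hi1 (by omega)).trans_le hri.1) hri.2 hR
    (fun j hj => (hr j (hIcc j hj).1 (hIcc j hj).2).1)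
    ((selection_criterion_iff hPT (hRpos (i + 1) (by omega) (by omega)) hR).1 hcriterion)
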